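/- arXiv:1809.08923 — 6 statements merged into one kernel-verified Lean document; each statement's English description precedes it below -/
import Mathlib

section
/- Let M_1 = (S,A,P,r,γ_1) and M_2 = (S,A,P,r,γ_2) be two finite MDPs differing only in discount factor, with rewards in [0,1] and optimal Q-functions Q_1*, Q_2*. Then ‖Q_1* - Q_2*‖_∞ ≤ |γ_1 - γ_2| ‖r‖_∞ / ((1-γ_1)(1-γ_2)). -/
/-! Write `Vᵢ s = ⨆ a, Qᵢ s a` and `E V s a = ∑ s', P s a s' * V s'`. Since `P` is stochastic, `E`
and the maximum over actions are non-expansive in the sup norm. Subtracting the two Bellman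
equations gives `Q₁ - Q₂ = (γ₁ - γ₂) E V₁ + γ₂ E (V₁ - V₂)`, hence
`‖Q₁ - Q₂‖ ≤ |γ₁ - γ₂| ‖Q₁‖ + γ₂ ‖Q₁ - Q₂‖`, while the Bellman equation for `Q₁` alone gives
`‖Q₁‖ ≤ ‖r‖ + γ₁ ‖Q₁‖`. Solving both inequalities yields the bound. -/

open Finset Function

section SupBounds

variable {ι : Type*} [Finite ι] {f g : ι → ℝ} {C : ℝ}

theorem abs_le_iSup_abs (f : ι → ℝ) (i : ι) : |f i| ≤ ⨆ j, |f j| :=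
  le_ciSup (Finite.bddAbove_range fun j => |f j|) i

theorem abs_iSup_sub_iSup_le (hC : 0 ≤ C) (h : ∀ i, |f i - g i| ≤ C) :
    |(⨆ i, f i) - ⨆ i, g i| ≤ C := by
  cases isEmpty_or_nonempty ι
  · simpa using hC
  have one_side : ∀ f g : ι → ℝ, (∀ i, f i - g i ≤ C) → (⨆ i, f i) - ⨆ i, g i ≤ C :=
    fun f g h => sub_le_iff_le_add.2 <| ciSup_le fun i => by
      linarith [h i, le_ciSup (Finite.bddAbove_range g) i]
  exact abs_sub_le_iff.2
    ⟨one_side f g fun i => (abs_le.1 (h i)).2, one_side g f fun i => (abs_sub_le_iff.1 (h i)).2⟩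

theorem abs_iSup_le (hC : 0 ≤ C) (h : ∀ i, |f i| ≤ C) : |⨆ i, f i| ≤ C := by
  simpa using abs_iSup_sub_iSup_le (g := 0) hC (by simpa using h)

end SupBounds

theorem abs_sum_mul_le_of_stochastic {ι : Type*} [Fintype ι] {w v : ι → ℝ} {C : ℝ}
    (hw0 : ∀ i, 0 ≤ w i) (hw1 : ∑ i, w i = 1) (hv : ∀ i, |v i| ≤ C) :
    |∑ i, w i * v i| ≤ C :=
  calc |∑ i, w i * v i| ≤ ∑ i, w i * |v i| := by
        simpa only [abs_mul, abs_of_nonneg (hw0 _)] using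
          abs_sum_le_sum_abs (fun i => w i * v i) univ
    _ ≤ ∑ i, w i * C := sum_le_sum fun i _ => mul_le_mul_of_nonneg_left (hv i) (hw0 i)
    _ = C := by rw [← sum_mul, hw1, one_mul]

section BellmanOptimality

variable {S A : Type*} [Fintype S] [Fintype A]

def IsBellmanOptimal (P : S → A → S → ℝ) (r : S → A → ℝ) (γ : ℝ) (Q : S → A → ℝ) : Prop :=
  ∀ s a, Q s a = r s a + γ * ∑ s', P s a s' * ⨆ a', Q s' a'

variable {P : S → A → S → ℝ} {r Q Q₁ Q₂ : S → A → ℝ} {γ γ₁ γ₂ C : ℝ}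

theorem abs_sum_mul_iSup_le (hP0 : ∀ s a s', 0 ≤ P s a s') (hP1 : ∀ s a, ∑ s', P s a s' = 1)
    (hC : 0 ≤ C) (h : ∀ s a, |Q s a| ≤ C) (s : S) (a : A) :
    |∑ s', P s a s' * ⨆ a', Q s' a'| ≤ C :=
  abs_sum_mul_le_of_stochastic (hP0 s a) (hP1 s a) fun s' => abs_iSup_le hC (h s')

theorem abs_sum_mul_iSup_sub_iSup_le (hP0 : ∀ s a s', 0 ≤ P s a s')
    (hP1 : ∀ s a, ∑ s', P s a s' = 1) (hC : 0 ≤ C) (h : ∀ s a, |Q₁ s a - Q₂ s a| ≤ C)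
    (s : S) (a : A) :
    |∑ s', P s a s' * ((⨆ a', Q₁ s' a') - ⨆ a', Q₂ s' a')| ≤ C :=
  abs_sum_mul_le_of_stochastic (hP0 s a) (hP1 s a) fun s' => abs_iSup_sub_iSup_le hC (h s')

theorem iSup_abs_le_of_isBellmanOptimal (hP0 : ∀ s a s', 0 ≤ P s a s')
    (hP1 : ∀ s a, ∑ s', P s a s' = 1) (hγ0 : 0 ≤ γ) (hγ1 : γ < 1)
    (hQ : IsBellmanOptimal P r γ Q) :
    (⨆ p : S × A, |Q p.1 p.2|) ≤ (⨆ p : S × A, |r p.1 p.2|) / (1 - γ) := by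
  set M := ⨆ p : S × A, |Q p.1 p.2|
  set R := ⨆ p : S × A, |r p.1 p.2|
  have hM0 : 0 ≤ M := Real.iSup_nonneg fun _ => abs_nonneg _
  have hR0 : 0 ≤ R := Real.iSup_nonneg fun _ => abs_nonneg _
  have hrec : M ≤ R + γ * M := by
    refine Real.iSup_le (fun ⟨s, a⟩ => ?_) (by positivity)
    calc |Q s a| = |r s a + γ * ∑ s', P s a s' * ⨆ a', Q s' a'| := by rw [hQ s a]
      _ ≤ |r s a| + |γ * ∑ s', P s a s' * ⨆ a', Q s' a'| := abs_add_le _ _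
      _ = |r s a| + γ * |∑ s', P s a s' * ⨆ a', Q s' a'| := by rw [abs_mul, abs_of_nonneg hγ0]
      _ ≤ R + γ * M := by
          gcongr
          · exact abs_le_iSup_abs (uncurry r) (s, a)
          · exact abs_sum_mul_iSup_le hP0 hP1 hM0
              (fun s a => abs_le_iSup_abs (uncurry Q) (s, a)) s a
  rw [le_div_iff₀ (by linarith)]
  linarith

theorem iSup_abs_sub_le_of_isBellmanOptimal (hP0 : ∀ s a s', 0 ≤ P s a s')
    (hP1 : ∀ s a, ∑ s', P s a s' = 1) (hγ₂0 : 0 ≤ γ₂) (hγ₂1 : γ₂ < 1)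
    (hQ₁ : IsBellmanOptimal P r γ₁ Q₁) (hQ₂ : IsBellmanOptimal P r γ₂ Q₂) :
    (⨆ p : S × A, |Q₁ p.1 p.2 - Q₂ p.1 p.2|) ≤
      |γ₁ - γ₂| * (⨆ p : S × A, |Q₁ p.1 p.2|) / (1 - γ₂) := by
  set D := ⨆ p : S × A, |Q₁ p.1 p.2 - Q₂ p.1 p.2|
  set M := ⨆ p : S × A, |Q₁ p.1 p.2|
  have hD0 : 0 ≤ D := Real.iSup_nonneg fun _ => abs_nonneg _
  have hM0 : 0 ≤ M := Real.iSup_nonneg fun _ => abs_nonneg _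
  have hrec : D ≤ |γ₁ - γ₂| * M + γ₂ * D := by
    refine Real.iSup_le (fun ⟨s, a⟩ => ?_) (by positivity)
    have split : Q₁ s a - Q₂ s a = (γ₁ - γ₂) * ∑ s', P s a s' * (⨆ a', Q₁ s' a') +
        γ₂ * ∑ s', P s a s' * ((⨆ a', Q₁ s' a') - ⨆ a', Q₂ s' a') := by
      rw [hQ₁ s a, hQ₂ s a]
      simp only [mul_sub, sum_sub_distrib]
      ring
    calc |Q₁ s a - Q₂ s a|
        ≤ |(γ₁ - γ₂) * ∑ s', P s a s' * (⨆ a', Q₁ s' a')| +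
          |γ₂ * ∑ s', P s a s' * ((⨆ a', Q₁ s' a') - ⨆ a', Q₂ s' a')| :=
          split ▸ abs_add_le _ _
      _ = |γ₁ - γ₂| * |∑ s', P s a s' * (⨆ a', Q₁ s' a')| +
          γ₂ * |∑ s', P s a s' * ((⨆ a', Q₁ s' a') - ⨆ a', Q₂ s' a')| := by
          rw [abs_mul, abs_mul, abs_of_nonneg hγ₂0]
      _ ≤ |γ₁ - γ₂| * M + γ₂ * D := by
          gcongr
          · exact abs_sum_mul_iSup_le hP0 hP1 hM0
              (fun s a => abs_le_iSup_abs (uncurry Q₁) (s, a)) s a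
          · exact abs_sum_mul_iSup_sub_iSup_le hP0 hP1 hD0
              (fun s a => abs_le_iSup_abs (uncurry (Q₁ - Q₂)) (s, a)) s a
  rw [le_div_iff₀ (by linarith)]
  linarith

end BellmanOptimality

theorem optimal_q_diff_discount_general
    {S A : Type*} [Fintype S] [Fintype A]
    (P : S → A → S → ℝ) (hP0 : ∀ s a s', 0 ≤ P s a s')
    (hP1 : ∀ s a, ∑ s', P s a s' = 1)
    (r : S → A → ℝ)
    (γ₁ γ₂ : ℝ) (hγ₁ : γ₁ ∈ Set.Ioo (0 : ℝ) 1) (hγ₂ : γ₂ ∈ Set.Ioo (0 : ℝ) 1)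
    (Q₁ Q₂ : S → A → ℝ)
    (hQ₁ : ∀ s a, Q₁ s a = r s a + γ₁ * ∑ s', P s a s' * (⨆ a', Q₁ s' a'))
    (hQ₂ : ∀ s a, Q₂ s a = r s a + γ₂ * ∑ s', P s a s' * (⨆ a', Q₂ s' a')) :
    (⨆ p : S × A, |Q₁ p.1 p.2 - Q₂ p.1 p.2|) ≤
      |γ₁ - γ₂| * (⨆ p : S × A, |r p.1 p.2|) / ((1 - γ₁) * (1 - γ₂)) := by
  have h1γ₂ : 0 < 1 - γ₂ := sub_pos.2 hγ₂.2
  calc (⨆ p : S × A, |Q₁ p.1 p.2 - Q₂ p.1 p.2|)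
      ≤ |γ₁ - γ₂| * (⨆ p : S × A, |Q₁ p.1 p.2|) / (1 - γ₂) :=
        iSup_abs_sub_le_of_isBellmanOptimal hP0 hP1 hγ₂.1.le hγ₂.2 hQ₁ hQ₂
    _ ≤ |γ₁ - γ₂| * ((⨆ p : S × A, |r p.1 p.2|) / (1 - γ₁)) / (1 - γ₂) := by
        gcongr
        exact iSup_abs_le_of_isBellmanOptimal hP0 hP1 hγ₁.1.le hγ₁.2 hQ₁
    _ = |γ₁ - γ₂| * (⨆ p : S × A, |r p.1 p.2|) / ((1 - γ₁) * (1 - γ₂)) := by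
        rw [mul_div_assoc', div_div]

/-- For two finite MDPs differing only in the discount factor, with rewards in
`[0,1]` and optimal Q-functions `Q₁*`, `Q₂*`, we have
`‖Q₁* - Q₂*‖_∞ ≤ |γ₁ - γ₂| ‖r‖_∞ / ((1-γ₁)(1-γ₂))`. -/
theorem optimal_q_diff_discount
    {S A : Type*} [Fintype S] [Fintype A] [Nonempty S] [Nonempty A]
    (P : S → A → S → ℝ) (hP0 : ∀ s a s', 0 ≤ P s a s')
    (hP1 : ∀ s a, ∑ s', P s a s' = 1)
    (r : S → A → ℝ) (hr : ∀ s a, r s a ∈ Set.Icc (0 : ℝ) 1)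
    (γ₁ γ₂ : ℝ) (hγ₁ : γ₁ ∈ Set.Ioo (0 : ℝ) 1) (hγ₂ : γ₂ ∈ Set.Ioo (0 : ℝ) 1)
    (Q₁ Q₂ : S → A → ℝ)
    (hQ₁ : ∀ s a, Q₁ s a = r s a + γ₁ * ∑ s', P s a s' * (⨆ a', Q₁ s' a'))
    (hQ₂ : ∀ s a, Q₂ s a = r s a + γ₂ * ∑ s', P s a s' * (⨆ a', Q₂ s' a')) :
    (⨆ p : S × A, |Q₁ p.1 p.2 - Q₂ p.1 p.2|) ≤
      |γ₁ - γ₂| * (⨆ p : S × A, |r p.1 p.2|) / ((1 - γ₁) * (1 - γ₂)) :=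
  optimal_q_diff_discount_general P hP0 hP1 r γ₁ γ₂ hγ₁ hγ₂ Q₁ Q₂ hQ₁ hQ₂
end

section
/- Let M_1 = (S,A,P_1,r,γ) and M_2 = (S,A,P_2,r,γ) be two finite MDPs differing only in transition kernel, with optimal Q-functions Q_1*, Q_2*. Then ‖Q_1* - Q_2*‖_∞ ≤ γ ‖r‖_∞ ‖P_1 - P_2‖_∞ / (1-γ)², where ‖P_1 - P_2‖_∞ = max_{s,a} ∑_{s'} |P_1(s'|s,a) - P_2(s'|s,a)|. -/
/-!
Write `‖·‖` for the sup norm. Taking the maximum over actions is 1-Lipschitz for it, and averaging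
against a probability vector does not increase it. Hence the Bellman equation gives
`‖Q₁‖ ≤ ‖r‖ + γ ‖Q₁‖`, while splitting `P₁ V₁ - P₂ V₂ = (P₁ - P₂) V₁ + P₂ (V₁ - V₂)` gives
`‖Q₁ - Q₂‖ ≤ γ (‖P₁ - P₂‖ ‖Q₁‖ + ‖Q₁ - Q₂‖)`. Solving the first inequality for `‖Q₁‖` and
substituting into the second yields the bound.
-/

open Finset

section SupNorm

variable {ι κ : Type*} [Fintype ι] [Fintype κ]

theorem iSup_prod_abs_eq_norm (f : ι → κ → ℝ) : ⨆ p : ι × κ, |f p.1 p.2| = ‖f‖ := by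
  have hbdd := Finite.bddAbove_range fun p : ι × κ => |f p.1 p.2|
  refine le_antisymm (Real.iSup_le (fun p => ?_) (norm_nonneg f)) ?_
  · exact (norm_le_pi_norm (f p.1) p.2).trans (norm_le_pi_norm f p.1)
  · refine (pi_norm_le_iff_of_nonneg (Real.iSup_nonneg fun _ => abs_nonneg _)).2 fun i => ?_
    exact (pi_norm_le_iff_of_nonneg (Real.iSup_nonneg fun _ => abs_nonneg _)).2
      fun j => le_ciSup hbdd (i, j)

theorem iSup_sub_iSup_le_norm_sub (f g : ι → ℝ) : (⨆ i, f i) - ⨆ i, g i ≤ ‖f - g‖ := by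
  cases isEmpty_or_nonempty ι
  · simp [Real.iSup_of_isEmpty]
  rw [sub_le_iff_le_add]
  refine ciSup_le fun i => ?_
  have hfg : f i - g i ≤ ‖f - g‖ := (le_abs_self _).trans (norm_le_pi_norm (f - g) i)
  linarith [le_ciSup (Finite.bddAbove_range g) i]

theorem abs_iSup_sub_iSup_le_norm_sub (f g : ι → ℝ) : |(⨆ i, f i) - ⨆ i, g i| ≤ ‖f - g‖ :=
  abs_sub_le_iff.2 ⟨iSup_sub_iSup_le_norm_sub f g, norm_sub_rev f g ▸ iSup_sub_iSup_le_norm_sub g f⟩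

theorem abs_iSup_le_norm (f : ι → ℝ) : |⨆ i, f i| ≤ ‖f‖ := by
  simpa using abs_iSup_sub_iSup_le_norm_sub f 0

theorem norm_iSup_le_norm (f : ι → κ → ℝ) : ‖fun i => ⨆ j, f i j‖ ≤ ‖f‖ :=
  (pi_norm_le_iff_of_nonneg (norm_nonneg f)).2 fun i =>
    (abs_iSup_le_norm (f i)).trans (norm_le_pi_norm f i)

theorem norm_iSup_sub_iSup_le_norm_sub (f g : ι → κ → ℝ) :
    ‖(fun i => ⨆ j, f i j) - fun i => ⨆ j, g i j‖ ≤ ‖f - g‖ :=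
  (pi_norm_le_iff_of_nonneg (norm_nonneg _)).2 fun i =>
    (abs_iSup_sub_iSup_le_norm_sub (f i) (g i)).trans (norm_le_pi_norm (f - g) i)

theorem abs_sum_mul_le_sum_abs_mul_norm (c v : ι → ℝ) : |∑ i, c i * v i| ≤ (∑ i, |c i|) * ‖v‖ :=
  calc |∑ i, c i * v i| ≤ ∑ i, |c i| * |v i| := by
        simpa only [abs_mul] using abs_sum_le_sum_abs (fun i => c i * v i) univ
    _ ≤ ∑ i, |c i| * ‖v‖ :=
        sum_le_sum fun i _ => mul_le_mul_of_nonneg_left (norm_le_pi_norm v i) (abs_nonneg _)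
    _ = (∑ i, |c i|) * ‖v‖ := (sum_mul ..).symm

theorem abs_sum_mul_le_norm {p : ι → ℝ} (hp0 : ∀ i, 0 ≤ p i) (hp1 : ∑ i, p i = 1) (v : ι → ℝ) :
    |∑ i, p i * v i| ≤ ‖v‖ := by
  simpa [abs_of_nonneg (hp0 _), hp1] using abs_sum_mul_le_sum_abs_mul_norm p v

theorem abs_sum_mul_sub_sum_mul_le {p q : ι → ℝ} (hq0 : ∀ i, 0 ≤ q i) (hq1 : ∑ i, q i = 1)
    (v w : ι → ℝ) :
    |∑ i, p i * v i - ∑ i, q i * w i| ≤ (∑ i, |p i - q i|) * ‖v‖ + ‖v - w‖ := by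
  have hsplit : ∑ i, p i * v i - ∑ i, q i * w i =
      ∑ i, (p i - q i) * v i + ∑ i, q i * (v - w) i := by
    simp only [Pi.sub_apply, ← sum_add_distrib, ← sum_sub_distrib]
    exact sum_congr rfl fun i _ => by ring
  rw [hsplit]
  exact (abs_add_le _ _).trans (add_le_add (abs_sum_mul_le_sum_abs_mul_norm _ v)
    (abs_sum_mul_le_norm hq0 hq1 (v - w)))

end SupNorm

section Bellman

variable {S A : Type*} [Fintype S] [Fintype A] {γ : ℝ}

theorem norm_le_of_bellman_eq {P : S → A → S → ℝ} (hP0 : ∀ s a s', 0 ≤ P s a s')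
    (hP1 : ∀ s a, ∑ s', P s a s' = 1) {r Q : S → A → ℝ} (hγ : 0 ≤ γ)
    (hQ : ∀ s a, Q s a = r s a + γ * ∑ s', P s a s' * ⨆ a', Q s' a') :
    ‖Q‖ ≤ ‖r‖ + γ * ‖Q‖ := by
  have hbound : 0 ≤ ‖r‖ + γ * ‖Q‖ := by positivity
  refine (pi_norm_le_iff_of_nonneg hbound).2 fun s => (pi_norm_le_iff_of_nonneg hbound).2 fun a => ?_
  have hexp : |∑ s', P s a s' * ⨆ a', Q s' a'| ≤ ‖Q‖ :=
    (abs_sum_mul_le_norm (hP0 s a) (hP1 s a) _).trans (norm_iSup_le_norm Q)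
  calc ‖Q s a‖ = |r s a + γ * ∑ s', P s a s' * ⨆ a', Q s' a'| := by rw [Real.norm_eq_abs, hQ]
    _ ≤ |r s a| + γ * |∑ s', P s a s' * ⨆ a', Q s' a'| :=
        (abs_add_le _ _).trans_eq (by rw [abs_mul, abs_of_nonneg hγ])
    _ ≤ ‖r‖ + γ * ‖Q‖ :=
        add_le_add ((norm_le_pi_norm (r s) a).trans (norm_le_pi_norm r s))
          (mul_le_mul_of_nonneg_left hexp hγ)

theorem norm_sub_le_of_bellman_eq {P₁ P₂ : S → A → S → ℝ} (hP₂0 : ∀ s a s', 0 ≤ P₂ s a s')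
    (hP₂1 : ∀ s a, ∑ s', P₂ s a s' = 1) {Δ : ℝ} (hΔ0 : 0 ≤ Δ)
    (hΔ : ∀ s a, ∑ s', |P₁ s a s' - P₂ s a s'| ≤ Δ) {r Q₁ Q₂ : S → A → ℝ} (hγ : 0 ≤ γ)
    (hQ₁ : ∀ s a, Q₁ s a = r s a + γ * ∑ s', P₁ s a s' * ⨆ a', Q₁ s' a')
    (hQ₂ : ∀ s a, Q₂ s a = r s a + γ * ∑ s', P₂ s a s' * ⨆ a', Q₂ s' a') :
    ‖Q₁ - Q₂‖ ≤ γ * (Δ * ‖Q₁‖ + ‖Q₁ - Q₂‖) := by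
  set V₁ : S → ℝ := fun s => ⨆ a, Q₁ s a
  set V₂ : S → ℝ := fun s => ⨆ a, Q₂ s a
  have hbound : 0 ≤ γ * (Δ * ‖Q₁‖ + ‖Q₁ - Q₂‖) := by positivity
  refine (pi_norm_le_iff_of_nonneg hbound).2 fun s => (pi_norm_le_iff_of_nonneg hbound).2 fun a => ?_
  have hexp : |∑ s', P₁ s a s' * V₁ s' - ∑ s', P₂ s a s' * V₂ s'| ≤ Δ * ‖Q₁‖ + ‖Q₁ - Q₂‖ :=
    (abs_sum_mul_sub_sum_mul_le (hP₂0 s a) (hP₂1 s a) V₁ V₂).trans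
      (add_le_add (mul_le_mul (hΔ s a) (norm_iSup_le_norm Q₁) (norm_nonneg _) hΔ0)
        (norm_iSup_sub_iSup_le_norm_sub Q₁ Q₂))
  calc ‖(Q₁ - Q₂) s a‖ = γ * |∑ s', P₁ s a s' * V₁ s' - ∑ s', P₂ s a s' * V₂ s'| := by
        rw [Pi.sub_apply, Pi.sub_apply, Real.norm_eq_abs, hQ₁, hQ₂, add_sub_add_left_eq_sub,
          ← mul_sub, abs_mul, abs_of_nonneg hγ]
    _ ≤ γ * (Δ * ‖Q₁‖ + ‖Q₁ - Q₂‖) := mul_le_mul_of_nonneg_left hexp hγ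

end Bellman

theorem optimal_q_diff_transition_general
    {S A : Type*} [Fintype S] [Fintype A]
    (P₁ P₂ : S → A → S → ℝ)
    (hP₁0 : ∀ s a s', 0 ≤ P₁ s a s') (hP₁1 : ∀ s a, ∑ s', P₁ s a s' = 1)
    (hP₂0 : ∀ s a s', 0 ≤ P₂ s a s') (hP₂1 : ∀ s a, ∑ s', P₂ s a s' = 1)
    (r : S → A → ℝ) (γ : ℝ) (hγ0 : 0 < γ) (hγ1 : γ < 1)
    (Q₁ Q₂ : S → A → ℝ)
    (hQ₁ : ∀ s a, Q₁ s a = r s a + γ * ∑ s', P₁ s a s' * (⨆ a', Q₁ s' a'))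
    (hQ₂ : ∀ s a, Q₂ s a = r s a + γ * ∑ s', P₂ s a s' * (⨆ a', Q₂ s' a')) :
    (⨆ p : S × A, |Q₁ p.1 p.2 - Q₂ p.1 p.2|) ≤
      γ * (⨆ p : S × A, |r p.1 p.2|) *
        (⨆ p : S × A, ∑ s', |P₁ p.1 p.2 s' - P₂ p.1 p.2 s'|) / (1 - γ) ^ 2 := by
  set Δ := ⨆ p : S × A, ∑ s', |P₁ p.1 p.2 s' - P₂ p.1 p.2 s'|
  have hΔ0 : 0 ≤ Δ := Real.iSup_nonneg fun _ => sum_nonneg fun _ _ => abs_nonneg _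
  have hΔ : ∀ s a, ∑ s', |P₁ s a s' - P₂ s a s'| ≤ Δ := fun s a =>
    le_ciSup (Finite.bddAbove_range fun p : S × A => ∑ s', |P₁ p.1 p.2 s' - P₂ p.1 p.2 s'|) (s, a)
  have hQ₁r := norm_le_of_bellman_eq hP₁0 hP₁1 hγ0.le hQ₁
  have hQ₁₂ := norm_sub_le_of_bellman_eq hP₂0 hP₂1 hΔ0 hΔ hγ0.le hQ₁ hQ₂
  rw [iSup_prod_abs_eq_norm r, show (⨆ p : S × A, |Q₁ p.1 p.2 - Q₂ p.1 p.2|) = ‖Q₁ - Q₂‖ from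
    iSup_prod_abs_eq_norm (Q₁ - Q₂), le_div_iff₀ (pow_pos (sub_pos.2 hγ1) 2)]
  nlinarith [mul_le_mul_of_nonneg_left hQ₁₂ (sub_pos.2 hγ1).le,
    mul_le_mul_of_nonneg_left hQ₁r (mul_nonneg hγ0.le hΔ0)]

/-- For two finite MDPs differing only in the transition kernel, with optimal
Q-functions `Q₁*`, `Q₂*`, we have
`‖Q₁* - Q₂*‖_∞ ≤ γ ‖r‖_∞ ‖P₁ - P₂‖_∞ / (1-γ)²`, where
`‖P₁ - P₂‖_∞ = max_{s,a} ∑_{s'} |P₁(s'|s,a) - P₂(s'|s,a)|`. -/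
theorem optimal_q_diff_transition
    {S A : Type*} [Fintype S] [Fintype A] [Nonempty S] [Nonempty A]
    (P₁ P₂ : S → A → S → ℝ)
    (hP₁0 : ∀ s a s', 0 ≤ P₁ s a s') (hP₁1 : ∀ s a, ∑ s', P₁ s a s' = 1)
    (hP₂0 : ∀ s a s', 0 ≤ P₂ s a s') (hP₂1 : ∀ s a, ∑ s', P₂ s a s' = 1)
    (r : S → A → ℝ) (γ : ℝ) (hγ0 : 0 < γ) (hγ1 : γ < 1)
    (Q₁ Q₂ : S → A → ℝ)
    (hQ₁ : ∀ s a, Q₁ s a = r s a + γ * ∑ s', P₁ s a s' * (⨆ a', Q₁ s' a'))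
    (hQ₂ : ∀ s a, Q₂ s a = r s a + γ * ∑ s', P₂ s a s' * (⨆ a', Q₂ s' a')) :
    (⨆ p : S × A, |Q₁ p.1 p.2 - Q₂ p.1 p.2|) ≤
      γ * (⨆ p : S × A, |r p.1 p.2|) *
        (⨆ p : S × A, ∑ s', |P₁ p.1 p.2 s' - P₂ p.1 p.2 s'|) / (1 - γ) ^ 2 :=
  optimal_q_diff_transition_general P₁ P₂ hP₁0 hP₁1 hP₂0 hP₂1 r γ hγ0 hγ1 Q₁ Q₂ hQ₁ hQ₂
end

section
/- Let M_1 = (S,A,P_1,r_1,γ_1) and M_2 = (S,A,P_2,r_2,γ_2) be finite MDPs with γ_1 ≤ γ_2 and ‖r_2‖_∞ ≤ ‖r_1‖_∞. Then ‖Q_1* - Q_2*‖_∞ ≤ ‖r_1 - r_2‖_∞/(1-γ_1) + γ_1 ‖r_2‖_∞ ‖P_1 - P_2‖_∞/(1-γ_1)² + |γ_1 - γ_2| ‖r_2‖_∞ / ((1-γ_1)(1-γ_2)). -/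
/-!
Write `T` for the Bellman optimality operator of `(P, r, γ)`; it is a `γ`-contraction in the sup
norm, so a fixed point `Q` of `T` satisfies `‖Q - Q'‖ ≤ ‖T Q' - Q'‖ / (1 - γ)` for every `Q'`.
If `Q'` is the fixed point of another operator `T'`, then `‖T Q' - Q'‖ = ‖T Q' - T' Q'‖` only sees
the change of the model at the fixed function `Q'`. Changing `r`, then `P`, then `γ` one at a
time, the three steps all contract with the factor `γ₁`, and the last two are controlled by the
sizes `‖Q‖ ≤ ‖r₂‖ / (1 - γ)` of the intermediate fixed points.
-/

open Function

lemma abs_ciSup_sub_ciSup_le_norm {ι : Type*} [Fintype ι] (f g : ι → ℝ) :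
    |(⨆ i, f i) - ⨆ i, g i| ≤ ‖f - g‖ := by
  cases isEmpty_or_nonempty ι
  · simp
  have key (f g : ι → ℝ) : (⨆ i, f i) ≤ (⨆ i, g i) + ‖f - g‖ :=
    ciSup_le fun i => calc
      f i ≤ g i + ‖f - g‖ := by
        have := norm_le_pi_norm (f - g) i
        rw [Pi.sub_apply, Real.norm_eq_abs] at this
        linarith [le_abs_self (f i - g i)]
      _ ≤ (⨆ i, g i) + ‖f - g‖ := by
        gcongr
        exact Finite.le_ciSup_of_le i le_rfl
  rw [abs_sub_le_iff]
  constructor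
  · linarith [key f g]
  · linarith [key g f, norm_sub_rev f g]

lemma abs_sum_mul_le_sum_abs_mul {ι : Type*} [Fintype ι] (w : ι → ℝ) {v : ι → ℝ} {c : ℝ}
    (hv : ∀ i, |v i| ≤ c) : |∑ i, w i * v i| ≤ (∑ i, |w i|) * c := by
  calc |∑ i, w i * v i| ≤ ∑ i, |w i| * |v i| := by
        simpa only [abs_mul] using Finset.abs_sum_le_sum_abs (fun i => w i * v i) Finset.univ
    _ ≤ ∑ i, |w i| * c := by gcongr with i; exact hv i
    _ = (∑ i, |w i|) * c := (Finset.sum_mul _ _ _).symm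

lemma abs_sum_mul_le_of_sum_eq_one {ι : Type*} [Fintype ι] {w v : ι → ℝ} {c : ℝ}
    (hw0 : ∀ i, 0 ≤ w i) (hw1 : ∑ i, w i = 1) (hv : ∀ i, |v i| ≤ c) :
    |∑ i, w i * v i| ≤ c := by
  simpa [abs_of_nonneg (hw0 _), hw1] using abs_sum_mul_le_sum_abs_mul w hv

section Bellman

variable {S A : Type*} [Fintype S] [Fintype A]

lemma iSup_abs_eq_norm (f : S → A → ℝ) : (⨆ p : S × A, |f p.1 p.2|) = ‖f‖ := by
  have hle (p : S × A) : |f p.1 p.2| ≤ ⨆ q : S × A, |f q.1 q.2| :=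
    Finite.le_ciSup_of_le p le_rfl
  refine le_antisymm (Real.iSup_le (fun p => ?_) (norm_nonneg f)) ?_
  · exact (norm_le_pi_norm (f p.1) p.2).trans (norm_le_pi_norm f p.1)
  · have h0 : 0 ≤ ⨆ p : S × A, |f p.1 p.2| := Real.iSup_nonneg fun _ => abs_nonneg _
    exact (pi_norm_le_iff_of_nonneg h0).2 fun s =>
      (pi_norm_le_iff_of_nonneg h0).2 fun a => hle (s, a)

lemma iSup_abs_sub_eq_norm_sub (f g : S → A → ℝ) :
    (⨆ p : S × A, |f p.1 p.2 - g p.1 p.2|) = ‖f - g‖ :=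
  iSup_abs_eq_norm (f - g)

lemma abs_iSup_sub_iSup_le_norm_sub_s8 (Q Q' : S → A → ℝ) (s : S) :
    |(⨆ a, Q s a) - ⨆ a, Q' s a| ≤ ‖Q - Q'‖ :=
  (abs_ciSup_sub_ciSup_le_norm (Q s) (Q' s)).trans (norm_le_pi_norm (Q - Q') s)

lemma abs_iSup_le_norm_s8 (Q : S → A → ℝ) (s : S) : |⨆ a, Q s a| ≤ ‖Q‖ := by
  simpa using abs_iSup_sub_iSup_le_norm_sub_s8 Q 0 s

noncomputable def bellman (P : S → A → S → ℝ) (r : S → A → ℝ) (γ : ℝ) (Q : S → A → ℝ) :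
    S → A → ℝ :=
  fun s a => r s a + γ * ∑ s', P s a s' * ⨆ a', Q s' a'

/-- `‖P - P'‖_∞`: the largest `ℓ¹` distance between the transition distributions. -/
noncomputable def transitionDist (P P' : S → A → S → ℝ) : ℝ :=
  ⨆ p : S × A, ∑ s', |P p.1 p.2 s' - P' p.1 p.2 s'|

variable {P P' : S → A → S → ℝ} {r r' : S → A → ℝ} {γ γ' : ℝ}

lemma sum_abs_sub_le_transitionDist (P P' : S → A → S → ℝ) (s : S) (a : A) :
    ∑ s', |P s a s' - P' s a s'| ≤ transitionDist P P' :=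
  Finite.le_ciSup_of_le (s, a) le_rfl

omit [Fintype A] in
lemma transitionDist_nonneg (P P' : S → A → S → ℝ) : 0 ≤ transitionDist P P' :=
  Real.iSup_nonneg fun _ => Finset.sum_nonneg fun _ _ => abs_nonneg _

omit [Fintype A] in
@[simp]
lemma transitionDist_self (P : S → A → S → ℝ) : transitionDist P P = 0 := by
  simp [transitionDist]

omit [Fintype A] in
@[simp]
lemma bellman_zero : bellman P r γ 0 = r := by
  ext s a
  simp [bellman]

lemma norm_bellman_sub_bellman_le (hP0 : ∀ s a s', 0 ≤ P s a s') (hP1 : ∀ s a, ∑ s', P s a s' = 1)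
    (hγ : 0 ≤ γ) (Q Q' : S → A → ℝ) :
    ‖bellman P r γ Q - bellman P r γ Q'‖ ≤ γ * ‖Q - Q'‖ := by
  have h0 : 0 ≤ γ * ‖Q - Q'‖ := by positivity
  refine (pi_norm_le_iff_of_nonneg h0).2 fun s => (pi_norm_le_iff_of_nonneg h0).2 fun a => ?_
  have hdiff : bellman P r γ Q s a - bellman P r γ Q' s a =
      γ * ∑ s', P s a s' * ((⨆ a', Q s' a') - ⨆ a', Q' s' a') := by
    simp only [bellman, mul_sub, Finset.sum_sub_distrib]
    ring
  rw [Pi.sub_apply, Pi.sub_apply, Real.norm_eq_abs, hdiff, abs_mul, abs_of_nonneg hγ]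
  gcongr
  exact abs_sum_mul_le_of_sum_eq_one (hP0 s a) (hP1 s a) (abs_iSup_sub_iSup_le_norm_sub_s8 Q Q')

lemma contractingWith_bellman (hP0 : ∀ s a s', 0 ≤ P s a s') (hP1 : ∀ s a, ∑ s', P s a s' = 1)
    (hγ0 : 0 ≤ γ) (hγ1 : γ < 1) : ContractingWith γ.toNNReal (bellman P r γ) :=
  ⟨Real.toNNReal_lt_one.2 hγ1, LipschitzWith.of_dist_le_mul fun Q Q' => by
    simpa only [dist_eq_norm, Real.coe_toNNReal γ hγ0] using
      norm_bellman_sub_bellman_le hP0 hP1 hγ0 Q Q'⟩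

lemma norm_bellman_sub_bellman_model_le (hP'0 : ∀ s a s', 0 ≤ P' s a s')
    (hP'1 : ∀ s a, ∑ s', P' s a s' = 1) (hγ : 0 ≤ γ) (Q : S → A → ℝ) :
    ‖bellman P r γ Q - bellman P' r' γ' Q‖ ≤ ‖r - r'‖
      + (γ * transitionDist P P' + |γ - γ'|) * ‖Q‖ := by
  have h0 : 0 ≤ ‖r - r'‖ + (γ * transitionDist P P' + |γ - γ'|) * ‖Q‖ := by
    have := transitionDist_nonneg P P'
    positivity
  refine (pi_norm_le_iff_of_nonneg h0).2 fun s => (pi_norm_le_iff_of_nonneg h0).2 fun a => ?_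
  have hdiff : bellman P r γ Q s a - bellman P' r' γ' Q s a = (r s a - r' s a)
      + γ * ∑ s', (P s a s' - P' s a s') * (⨆ a', Q s' a')
      + (γ - γ') * ∑ s', P' s a s' * (⨆ a', Q s' a') := by
    simp only [bellman, sub_mul, Finset.sum_sub_distrib]
    ring
  have hr_le : |r s a - r' s a| ≤ ‖r - r'‖ :=
    (norm_le_pi_norm (r s - r' s) a).trans (norm_le_pi_norm (r - r') s)
  have hP_le : |∑ s', (P s a s' - P' s a s') * (⨆ a', Q s' a')| ≤ transitionDist P P' * ‖Q‖ :=
    (abs_sum_mul_le_sum_abs_mul _ (abs_iSup_le_norm_s8 Q)).trans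
      (by gcongr; exact sum_abs_sub_le_transitionDist P P' s a)
  have hP'_le : |∑ s', P' s a s' * (⨆ a', Q s' a')| ≤ ‖Q‖ :=
    abs_sum_mul_le_of_sum_eq_one (hP'0 s a) (hP'1 s a) (abs_iSup_le_norm_s8 Q)
  rw [Pi.sub_apply, Pi.sub_apply, Real.norm_eq_abs, hdiff]
  calc _ ≤ |r s a - r' s a| + |γ| * |∑ s', (P s a s' - P' s a s') * (⨆ a', Q s' a')|
          + |γ - γ'| * |∑ s', P' s a s' * (⨆ a', Q s' a')| := by
        rw [← abs_mul, ← abs_mul]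
        exact (abs_add_le _ _).trans (add_le_add_left (abs_add_le _ _) _)
    _ ≤ ‖r - r'‖ + γ * (transitionDist P P' * ‖Q‖) + |γ - γ'| * ‖Q‖ := by
        rw [abs_of_nonneg hγ]
        gcongr
    _ = ‖r - r'‖ + (γ * transitionDist P P' + |γ - γ'|) * ‖Q‖ := by ring

variable (hP0 : ∀ s a s', 0 ≤ P s a s') (hP1 : ∀ s a, ∑ s', P s a s' = 1) (hγ0 : 0 ≤ γ) (hγ1 : γ < 1)
include hP0 hP1 hγ0 hγ1

lemma norm_sub_le_of_isFixedPt_bellman (hP'0 : ∀ s a s', 0 ≤ P' s a s')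
    (hP'1 : ∀ s a, ∑ s', P' s a s' = 1) {Q Q' : S → A → ℝ}
    (hQ : IsFixedPt (bellman P r γ) Q) (hQ' : IsFixedPt (bellman P' r' γ') Q') :
    ‖Q - Q'‖ ≤ (‖r - r'‖
      + (γ * transitionDist P P' + |γ - γ'|) * ‖Q'‖) / (1 - γ) := by
  have h := (contractingWith_bellman hP0 hP1 hγ0 hγ1).dist_le_of_fixedPoint Q' hQ
  rw [Real.coe_toNNReal γ hγ0, dist_comm, dist_eq_norm, dist_eq_norm] at h
  calc ‖Q - Q'‖ ≤ ‖Q' - bellman P r γ Q'‖ / (1 - γ) := h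
    _ = ‖bellman P r γ Q' - bellman P' r' γ' Q'‖ / (1 - γ) := by
      rw [norm_sub_rev, hQ'.eq]
    _ ≤ _ := by
      gcongr
      exact norm_bellman_sub_bellman_model_le hP'0 hP'1 hγ0 Q'

lemma norm_le_of_isFixedPt_bellman {Q : S → A → ℝ} (hQ : IsFixedPt (bellman P r γ) Q) :
    ‖Q‖ ≤ ‖r‖ / (1 - γ) := by
  simpa [Real.coe_toNNReal γ hγ0] using
    (contractingWith_bellman hP0 hP1 hγ0 hγ1).dist_le_of_fixedPoint 0 hQ

end Bellman

theorem optimal_q_diff_general_general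
    {S A : Type*} [Fintype S] [Fintype A]
    (P₁ P₂ : S → A → S → ℝ)
    (hP₁0 : ∀ s a s', 0 ≤ P₁ s a s') (hP₁1 : ∀ s a, ∑ s', P₁ s a s' = 1)
    (hP₂0 : ∀ s a s', 0 ≤ P₂ s a s') (hP₂1 : ∀ s a, ∑ s', P₂ s a s' = 1)
    (r₁ r₂ : S → A → ℝ)
    (γ₁ γ₂ : ℝ) (hγ₁ : γ₁ ∈ Set.Ioo (0 : ℝ) 1) (hγ₂ : γ₂ ∈ Set.Ioo (0 : ℝ) 1)
    (Q₁ Q₂ : S → A → ℝ)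
    (hQ₁ : ∀ s a, Q₁ s a = r₁ s a + γ₁ * ∑ s', P₁ s a s' * (⨆ a', Q₁ s' a'))
    (hQ₂ : ∀ s a, Q₂ s a = r₂ s a + γ₂ * ∑ s', P₂ s a s' * (⨆ a', Q₂ s' a')) :
    (⨆ p : S × A, |Q₁ p.1 p.2 - Q₂ p.1 p.2|) ≤
      (⨆ p : S × A, |r₁ p.1 p.2 - r₂ p.1 p.2|) / (1 - γ₁)
      + γ₁ * (⨆ p : S × A, |r₂ p.1 p.2|) *
          (⨆ p : S × A, ∑ s', |P₁ p.1 p.2 s' - P₂ p.1 p.2 s'|) / (1 - γ₁) ^ 2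
      + |γ₁ - γ₂| * (⨆ p : S × A, |r₂ p.1 p.2|) / ((1 - γ₁) * (1 - γ₂)) := by
  have hQ₁' : IsFixedPt (bellman P₁ r₁ γ₁) Q₁ := funext₂ fun s a => (hQ₁ s a).symm
  have hQ₂' : IsFixedPt (bellman P₂ r₂ γ₂) Q₂ := funext₂ fun s a => (hQ₂ s a).symm
  obtain ⟨Q₃, hQ₃⟩ : ∃ Q, IsFixedPt (bellman P₁ r₂ γ₁) Q :=
    ⟨_, (contractingWith_bellman hP₁0 hP₁1 hγ₁.1.le hγ₁.2).fixedPoint_isFixedPt⟩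
  obtain ⟨Q₄, hQ₄⟩ : ∃ Q, IsFixedPt (bellman P₂ r₂ γ₁) Q :=
    ⟨_, (contractingWith_bellman hP₂0 hP₂1 hγ₁.1.le hγ₁.2).fixedPoint_isFixedPt⟩
  have h₁₃ := norm_sub_le_of_isFixedPt_bellman hP₁0 hP₁1 hγ₁.1.le hγ₁.2 hP₁0 hP₁1 hQ₁' hQ₃
  have h₃₄ := norm_sub_le_of_isFixedPt_bellman hP₁0 hP₁1 hγ₁.1.le hγ₁.2 hP₂0 hP₂1 hQ₃ hQ₄
  have h₄₂ := norm_sub_le_of_isFixedPt_bellman hP₂0 hP₂1 hγ₁.1.le hγ₁.2 hP₂0 hP₂1 hQ₄ hQ₂'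
  have hQ₄_le := norm_le_of_isFixedPt_bellman hP₂0 hP₂1 hγ₁.1.le hγ₁.2 hQ₄
  have hQ₂_le := norm_le_of_isFixedPt_bellman hP₂0 hP₂1 hγ₂.1.le hγ₂.2 hQ₂'
  simp only [sub_self, abs_zero, norm_zero, transitionDist_self, mul_zero, zero_add, add_zero,
    zero_mul] at h₁₃ h₃₄ h₄₂
  rw [iSup_abs_sub_eq_norm_sub, iSup_abs_sub_eq_norm_sub, iSup_abs_eq_norm]
  have h1γ₁ : 0 < 1 - γ₁ := sub_pos.2 hγ₁.2
  have h1γ₂ : 0 < 1 - γ₂ := sub_pos.2 hγ₂.2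
  have hΔP := transitionDist_nonneg P₁ P₂
  calc ‖Q₁ - Q₂‖ ≤ ‖Q₁ - Q₃‖ + ‖Q₃ - Q₄‖ + ‖Q₄ - Q₂‖ :=
        (norm_sub_le_norm_sub_add_norm_sub _ Q₄ _).trans
          (add_le_add_left (norm_sub_le_norm_sub_add_norm_sub _ Q₃ _) _)
    _ ≤ ‖r₁ - r₂‖ / (1 - γ₁) + γ₁ * transitionDist P₁ P₂ * (‖r₂‖ / (1 - γ₁)) / (1 - γ₁)
          + |γ₁ - γ₂| * (‖r₂‖ / (1 - γ₂)) / (1 - γ₁) := by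
        grw [h₁₃, h₃₄, h₄₂, hQ₄_le, hQ₂_le]
        exact mul_nonneg hγ₁.1.le hΔP
    _ = _ := by rw [transitionDist]; field_simp

/-- For two finite MDPs `M₁ = (S,A,P₁,r₁,γ₁)`, `M₂ = (S,A,P₂,r₂,γ₂)` with
`γ₁ ≤ γ₂` and `‖r₂‖_∞ ≤ ‖r₁‖_∞`, the optimal Q-functions satisfy
`‖Q₁* - Q₂*‖_∞ ≤ ‖r₁ - r₂‖_∞/(1-γ₁) + γ₁‖r₂‖_∞‖P₁ - P₂‖_∞/(1-γ₁)²
  + |γ₁ - γ₂|‖r₂‖_∞/((1-γ₁)(1-γ₂))`. -/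
theorem optimal_q_diff_general
    {S A : Type*} [Fintype S] [Fintype A] [Nonempty S] [Nonempty A]
    (P₁ P₂ : S → A → S → ℝ)
    (hP₁0 : ∀ s a s', 0 ≤ P₁ s a s') (hP₁1 : ∀ s a, ∑ s', P₁ s a s' = 1)
    (hP₂0 : ∀ s a s', 0 ≤ P₂ s a s') (hP₂1 : ∀ s a, ∑ s', P₂ s a s' = 1)
    (r₁ r₂ : S → A → ℝ)
    (γ₁ γ₂ : ℝ) (hγ₁ : γ₁ ∈ Set.Ioo (0 : ℝ) 1) (hγ₂ : γ₂ ∈ Set.Ioo (0 : ℝ) 1)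
    (hγ : γ₁ ≤ γ₂)
    (hr : (⨆ p : S × A, |r₂ p.1 p.2|) ≤ ⨆ p : S × A, |r₁ p.1 p.2|)
    (Q₁ Q₂ : S → A → ℝ)
    (hQ₁ : ∀ s a, Q₁ s a = r₁ s a + γ₁ * ∑ s', P₁ s a s' * (⨆ a', Q₁ s' a'))
    (hQ₂ : ∀ s a, Q₂ s a = r₂ s a + γ₂ * ∑ s', P₂ s a s' * (⨆ a', Q₂ s' a')) :
    (⨆ p : S × A, |Q₁ p.1 p.2 - Q₂ p.1 p.2|) ≤
      (⨆ p : S × A, |r₁ p.1 p.2 - r₂ p.1 p.2|) / (1 - γ₁)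
      + γ₁ * (⨆ p : S × A, |r₂ p.1 p.2|) *
          (⨆ p : S × A, ∑ s', |P₁ p.1 p.2 s' - P₂ p.1 p.2 s'|) / (1 - γ₁) ^ 2
      + |γ₁ - γ₂| * (⨆ p : S × A, |r₂ p.1 p.2|) / ((1 - γ₁) * (1 - γ₂)) :=
  optimal_q_diff_general_general P₁ P₂ hP₁0 hP₁1 hP₂0 hP₂1 r₁ r₂ γ₁ γ₂ hγ₁ hγ₂ Q₁ Q₂ hQ₁ hQ₂
end

section
/- Let γβ* ∈ (1/2, 1) and define w_k = (∏_{i=n-k}^{n-1}(i+γβ*))/(∏_{i=n-k}^{n} i). Then there exists a constant C (depending only on γβ*) such that ∑_{k=0}^{n-1} w_k² ≤ C / n^{2-2γβ*} for all n ≥ 3. -/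
/-!
Since `w_k = (1/n) ∏_{i=n-k}^{n-1} (1 + c/i)` and, for `c ∈ [1/2, 1]`, Bernoulli's inequality gives
`1 + c/i ≤ ((2i+1)/(2i-1))^c`, the product telescopes to
`((2n-1)/(2(n-k)-1))^c ≤ (2n/(n-k))^c`. Hence `w_k² ≤ 4 n^(2c-2) (n-k)^(-2c)`, and summing over `k`
gives at most `4 ζ(2c) / n^(2-2c)`, finite because `2c > 1`.
-/

open Finset

theorem Finset.prod_Ico_le_div_of_le_div {K : Type*} [Field K] [LinearOrder K]
    [IsStrictOrderedRing K] {f g : ℕ → K} {m n : ℕ} (hmn : m ≤ n)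
    (hf : ∀ i, m ≤ i → 0 ≤ f i) (hg : ∀ i, m ≤ i → 0 < g i)
    (hfg : ∀ i, m ≤ i → f i ≤ g (i + 1) / g i) :
    ∏ i ∈ Ico m n, f i ≤ g n / g m := by
  induction n, hmn using Nat.le_induction with
  | base => simp [(hg m le_rfl).ne']
  | succ n hmn ih =>
    rw [prod_Ico_succ_top hmn]
    calc (∏ i ∈ Ico m n, f i) * f n ≤ g n / g m * (g (n + 1) / g n) :=
          mul_le_mul ih (hfg n hmn) (hf n hmn) (div_pos (hg n hmn) (hg m le_rfl)).le
      _ = g (n + 1) / g m := by field_simp [(hg n hmn).ne']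

theorem add_div_self_le_rpow_two_mul_add_one_div {c x : ℝ} (hc : 1 / 2 ≤ c) (hc1 : c ≤ 1)
    (hx : 1 / 2 < x) : (x + c) / x ≤ ((2 * x + 1) / (2 * x - 1)) ^ c := by
  -- The last step of this chain is `c (1 - 2c) ≤ 0`, which is where `1/2 ≤ c` enters.
  have hbernoulli : ((2 * x - 1) / (2 * x + 1)) ^ c ≤ x / (x + c) :=
    calc ((2 * x - 1) / (2 * x + 1)) ^ c = (1 + -(2 / (2 * x + 1))) ^ c := by
          congr 1; field_simp; ring
      _ ≤ 1 + c * -(2 / (2 * x + 1)) := by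
          refine rpow_one_add_le_one_add_mul_self ?_ (by linarith) hc1
          rw [neg_le_neg_iff, div_le_one (by linarith)]; linarith
      _ = (2 * x + 1 - 2 * c) / (2 * x + 1) := by field_simp; ring
      _ ≤ x / (x + c) := by
          rw [div_le_div_iff₀ (by linarith) (by linarith)]; nlinarith
  calc (x + c) / x = (x / (x + c))⁻¹ := (inv_div _ _).symm
    _ ≤ (((2 * x - 1) / (2 * x + 1)) ^ c)⁻¹ :=
        inv_anti₀ (Real.rpow_pos_of_pos (div_pos (by linarith) (by linarith)) c) hbernoulli
    _ = ((2 * x + 1) / (2 * x - 1)) ^ c := by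
        rw [← Real.inv_rpow (div_pos (by linarith) (by linarith)).le, inv_div]

theorem prod_Ico_add_div_le_rpow {c : ℝ} (hc : 1 / 2 ≤ c) (hc1 : c ≤ 1) {m n : ℕ}
    (hm : 1 ≤ m) (hmn : m ≤ n) :
    ∏ i ∈ Ico m n, (((i : ℝ) + c) / i) ≤ ((2 * n - 1) / (2 * m - 1) : ℝ) ^ c := by
  have hodd : ∀ i : ℕ, m ≤ i → (0 : ℝ) < 2 * i - 1 := fun i hi => by
    have : (1 : ℝ) ≤ i := by exact_mod_cast hm.trans hi
    linarith
  rw [Real.div_rpow (hodd n hmn).le (hodd m le_rfl).le]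
  refine prod_Ico_le_div_of_le_div hmn (fun i _ => by positivity)
    (fun i hi => Real.rpow_pos_of_pos (hodd i hi) c) fun i hi => ?_
  have hi1 : (1 : ℝ) ≤ i := by exact_mod_cast hm.trans hi
  rw [← Real.div_rpow (hodd _ (hi.trans i.le_succ)).le (hodd i hi).le]
  push_cast
  rw [show (2 : ℝ) * (i + 1) - 1 = 2 * i + 1 by ring]
  exact add_div_self_le_rpow_two_mul_add_one_div hc hc1 (by linarith)

theorem Finset.sum_range_sub_le_tsum {α : Type*} [AddCommMonoid α] [Preorder α]
    [IsOrderedAddMonoid α] [TopologicalSpace α] [OrderClosedTopology α] {f : ℕ → α}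
    (hf : Summable f) (hf0 : ∀ j, 0 ≤ f j) (n : ℕ) :
    ∑ k ∈ range n, f (n - k) ≤ ∑' j, f j := by
  rw [← sum_image fun a ha b hb h => by simp only [coe_range, Set.mem_Iio] at ha hb h; omega]
  exact hf.sum_le_tsum _ fun j _ => hf0 j

noncomputable def ttqlWeight (c : ℝ) (n k : ℕ) : ℝ :=
  (∏ i ∈ Ico (n - k) n, ((i : ℝ) + c)) / ∏ i ∈ Icc (n - k) n, (i : ℝ)

theorem ttqlWeight_eq (c : ℝ) (n k : ℕ) :
    ttqlWeight c n k = (∏ i ∈ Ico (n - k) n, (((i : ℝ) + c) / i)) / n := by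
  rw [ttqlWeight, ← Ico_add_one_right_eq_Icc, prod_Ico_succ_top (n.sub_le k),
    prod_div_distrib, div_div]

theorem ttqlWeight_nonneg {c : ℝ} (hc : 0 ≤ c) (n k : ℕ) : 0 ≤ ttqlWeight c n k := by
  rw [ttqlWeight_eq]
  exact div_nonneg (prod_nonneg fun i _ => by positivity) n.cast_nonneg

theorem ttqlWeight_le {c : ℝ} (hc : 1 / 2 ≤ c) (hc1 : c ≤ 1) {n k : ℕ} (hk : k < n) :
    ttqlWeight c n k ≤ 2 / ((n : ℝ) ^ (1 - c) * ((n - k : ℕ) : ℝ) ^ c) := by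
  set m := n - k
  have hm : (1 : ℝ) ≤ m := by exact_mod_cast (show 1 ≤ m by omega)
  have hmn : (m : ℝ) ≤ n := by exact_mod_cast n.sub_le k
  rw [ttqlWeight_eq]
  calc (∏ i ∈ Ico m n, (((i : ℝ) + c) / i)) / n
      ≤ ((2 * n - 1) / (2 * m - 1) : ℝ) ^ c / n := by
        gcongr
        exact prod_Ico_add_div_le_rpow hc hc1 (by omega) (n.sub_le k)
    _ ≤ (2 * n / m : ℝ) ^ c / n := by
        gcongr
        · exact div_nonneg (by linarith) (by linarith)
        · linarith
        · linarith
    _ = 2 ^ c / ((n : ℝ) ^ (1 - c) * (m : ℝ) ^ c) := by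
        have hn : (0 : ℝ) < n := by linarith
        rw [Real.div_rpow (by positivity) (by positivity), Real.mul_rpow (by norm_num) hn.le,
          Real.rpow_sub hn, Real.rpow_one]
        field_simp
    _ ≤ 2 / ((n : ℝ) ^ (1 - c) * (m : ℝ) ^ c) := by
        gcongr
        simpa using Real.rpow_le_rpow_of_exponent_le (by norm_num : (1 : ℝ) ≤ 2) hc1

theorem ttqlWeight_sq_le {c : ℝ} (hc : 1 / 2 ≤ c) (hc1 : c ≤ 1) {n k : ℕ} (hk : k < n) :
    ttqlWeight c n k ^ 2 ≤ 4 / (n : ℝ) ^ (2 - 2 * c) * (1 / ((n - k : ℕ) : ℝ) ^ (2 * c)) := by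
  have hsq : ∀ {x : ℝ}, 0 ≤ x → ∀ y : ℝ, (x ^ y) ^ 2 = x ^ (2 * y) := fun hx y => by
    rw [← Real.rpow_mul_natCast hx, mul_comm]; norm_num
  calc ttqlWeight c n k ^ 2
      ≤ (2 / ((n : ℝ) ^ (1 - c) * ((n - k : ℕ) : ℝ) ^ c)) ^ 2 :=
        pow_le_pow_left₀ (ttqlWeight_nonneg (by linarith) n k) (ttqlWeight_le hc hc1 hk) 2
    _ = 4 / (n : ℝ) ^ (2 - 2 * c) * (1 / ((n - k : ℕ) : ℝ) ^ (2 * c)) := by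
        rw [div_pow, mul_pow, hsq n.cast_nonneg, hsq (n - k).cast_nonneg]
        ring_nf

/-- For a discounted error ratio `c = γβ* ∈ (1/2, 1)` and weights
`w_k = (∏_{i=n-k}^{n-1} (i + c)) / (∏_{i=n-k}^{n} i)`, there is a constant `C`
depending only on `c` such that `∑_{k=0}^{n-1} w_k² ≤ C / n^{2-2c}` for all
`n ≥ 3`. -/
theorem ttql_weight_sum_sq_large_ratio
    (c : ℝ) (hc0 : 1 / 2 < c) (hc : c < 1) :
    ∃ C : ℝ, 0 < C ∧ ∀ n : ℕ, 3 ≤ n →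
      ∑ k ∈ Finset.range n,
          ((∏ i ∈ Finset.Ico (n - k) n, ((i : ℝ) + c)) /
            (∏ i ∈ Finset.Icc (n - k) n, (i : ℝ))) ^ 2 ≤
        C / (n : ℝ) ^ (2 - 2 * c) := by
  have hsum : Summable fun j : ℕ => 1 / (j : ℝ) ^ (2 * c) :=
    Real.summable_one_div_nat_rpow.mpr (by linarith)
  refine ⟨4 * ∑' j : ℕ, 1 / (j : ℝ) ^ (2 * c),
    mul_pos four_pos (hsum.tsum_pos (fun j => by positivity) 1 (by norm_num)), fun n _ => ?_⟩
  calc ∑ k ∈ range n, ttqlWeight c n k ^ 2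
      ≤ ∑ k ∈ range n, 4 / (n : ℝ) ^ (2 - 2 * c) * (1 / ((n - k : ℕ) : ℝ) ^ (2 * c)) :=
        sum_le_sum fun k hk => ttqlWeight_sq_le hc0.le hc.le (mem_range.mp hk)
    _ ≤ 4 / (n : ℝ) ^ (2 - 2 * c) * ∑' j : ℕ, 1 / (j : ℝ) ^ (2 * c) := by
        rw [← mul_sum]
        gcongr
        exact sum_range_sub_le_tsum hsum (fun j => by positivity) n
    _ = 4 * (∑' j : ℕ, 1 / (j : ℝ) ^ (2 * c)) / (n : ℝ) ^ (2 - 2 * c) := by ring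
end

section
/- For any γβ* ∈ [0,1), with w_k = (∏_{i=n-k}^{n-1}(i+γβ*))/(∏_{i=n-k}^{n} i), the sum ∑_{k=0}^{n-1} w_k² tends to 0 as n → ∞. -/
/-!
Peeling off the `k = 0` term shows that `S n = ∑ₖ wₖ²` satisfies
`S (n + 1) = ((n + c) / (n + 1))² S n + 1 / (n + 1)²`, hence, with `d = 1 - c > 0`,
`S (n + 1) ≤ (1 - d / (n + 1)) S n + 1 / (n + 1)²`. By induction `S n ≤ K n^(-d/4)`: the
contraction factor `1 - d / (n + 1)` absorbs both the growth
`(1 + 1/n)^(d/4) ≤ 1 + d / (2(n + 1))` of the bound and the source term `1 / (n + 1)²`.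
-/

open Finset Filter

noncomputable def weightSqSum (c : ℝ) (n : ℕ) : ℝ :=
  ∑ k ∈ range n,
    ((∏ i ∈ Ico (n - k) n, ((i : ℝ) + c)) / ∏ i ∈ Icc (n - k) n, (i : ℝ)) ^ 2

lemma weightSqSum_nonneg (c : ℝ) (n : ℕ) : 0 ≤ weightSqSum c n :=
  sum_nonneg fun _ _ => sq_nonneg _

lemma weightSqSum_succ (c : ℝ) (n : ℕ) :
    weightSqSum c (n + 1) = ((n + c) / (n + 1)) ^ 2 * weightSqSum c n + (1 / (n + 1)) ^ 2 := by
  rw [weightSqSum, sum_range_succ']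
  congr 1
  · rw [weightSqSum, mul_sum]
    refine sum_congr rfl fun k _ => ?_
    have hk : n - k ≤ n := Nat.sub_le n k
    rw [Nat.add_sub_add_right, prod_Ico_succ_top hk, prod_Icc_succ_top (Nat.le_succ_of_le hk),
      mul_div_mul_comm]
    push_cast
    ring
  · simp

lemma weightSqSum_succ_le {c : ℝ} (hc0 : 0 ≤ c) (hc1 : c ≤ 1) (n : ℕ) :
    weightSqSum c (n + 1) ≤ (1 - (1 - c) / (n + 1)) * weightSqSum c n + 1 / (n + 1) ^ 2 := by
  have hcoef : (n + c) / (n + 1) = 1 - (1 - c) / (n + 1) := by field_simp; ring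
  have hnonneg : 0 ≤ 1 - (1 - c) / (n + 1) := hcoef ▸ by positivity
  have hle_one : 1 - (1 - c) / (n + 1) ≤ 1 := by
    have : 0 ≤ (1 - c) / (n + 1) := div_nonneg (by linarith) (by positivity)
    linarith
  rw [weightSqSum_succ, hcoef, one_div_pow]
  gcongr
  · exact weightSqSum_nonneg c n
  · exact pow_le_of_le_one hnonneg hle_one two_ne_zero

lemma rpow_neg_le_add_one_rpow_neg_mul {N e : ℝ} (hN : 1 ≤ N) (he0 : 0 ≤ e) (he1 : e ≤ 1) :
    N ^ (-e) ≤ (N + 1) ^ (-e) * (1 + 2 * e / (N + 1)) := by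
  have hN0 : 0 < N := by linarith
  have hsplit : N ^ (-e) = (N + 1) ^ (-e) * (1 + 1 / N) ^ e := by
    rw [one_add_div hN0.ne', Real.div_rpow (by linarith) hN0.le,
      Real.rpow_neg (x := N + 1) (by linarith), Real.rpow_neg hN0.le]
    field_simp
  have hbernoulli : (1 + 1 / N) ^ e ≤ 1 + e * (1 / N) :=
    rpow_one_add_le_one_add_mul_self (by have := one_div_pos.2 hN0; linarith) he0 he1
  have hN : e * (1 / N) ≤ 2 * e / (N + 1) := by
    rw [mul_one_div, div_le_div_iff₀ hN0 (by linarith)]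
    nlinarith
  rw [hsplit]
  gcongr
  linarith

lemma le_mul_rpow_neg_of_le_one_sub_div_mul_add {x : ℕ → ℝ} {d K : ℝ} (hd0 : 0 < d)
    (hd2 : d ≤ 2) (hK : 2 ≤ K * d) (hx1 : x 1 ≤ K)
    (hstep : ∀ n ≥ 1, x (n + 1) ≤ (1 - d / (n + 1)) * x n + 1 / (n + 1) ^ 2) :
    ∀ n ≥ 1, x n ≤ K * (n : ℝ) ^ (-(d / 4)) := by
  intro n hn
  induction n, hn using Nat.le_induction with
  | base => simpa using hx1
  | succ n hn ih =>
    have hN : (1 : ℝ) ≤ n := by exact_mod_cast hn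
    have hK0 : 0 < K := by nlinarith
    set a := 1 - d / (n + 1) with ha
    set M := K * ((n : ℝ) + 1) ^ (-(d / 4))
    have ha0 : 0 ≤ a := by
      rw [ha, sub_nonneg, div_le_one (by positivity)]
      linarith
    have hM0 : 0 ≤ M := by positivity
    have hcontract : a * (1 + 2 * (d / 4) / (n + 1)) ≤ 1 - d / (2 * (n + 1)) := by
      rw [ha, ← sub_nonneg]
      have : 0 ≤ d ^ 2 / (2 * (n + 1) ^ 2) := by positivity
      convert this using 1
      field_simp
      ring
    have hsource : 1 / ((n : ℝ) + 1) ^ 2 ≤ M * (d / (2 * (n + 1))) := by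
      have hpow : ((n : ℝ) + 1) ^ (-1 : ℝ) ≤ ((n : ℝ) + 1) ^ (-(d / 4)) :=
        Real.rpow_le_rpow_of_exponent_le (by linarith) (by linarith)
      rw [Real.rpow_neg_one] at hpow
      calc 1 / ((n : ℝ) + 1) ^ 2 = ((n : ℝ) + 1)⁻¹ * (1 / (n + 1)) := by field_simp
        _ ≤ ((n : ℝ) + 1) ^ (-(d / 4)) * (K * d / 2 / (n + 1)) := by
          gcongr
          linarith
        _ = M * (d / (2 * (n + 1))) := by field_simp; ring
    push_cast
    calc x (n + 1) ≤ a * x n + 1 / ((n : ℝ) + 1) ^ 2 := hstep n hn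
      _ ≤ a * (K * ((n + 1) ^ (-(d / 4)) * (1 + 2 * (d / 4) / (n + 1))))
          + 1 / ((n : ℝ) + 1) ^ 2 := by
        gcongr
        refine ih.trans ?_
        gcongr
        exact rpow_neg_le_add_one_rpow_neg_mul hN (by positivity) (by linarith)
      _ = M * (a * (1 + 2 * (d / 4) / (n + 1))) + 1 / ((n : ℝ) + 1) ^ 2 := by ring
      _ ≤ M * (1 - d / (2 * (n + 1))) + M * (d / (2 * (n + 1))) := by gcongr
      _ = M := by ring

lemma tendsto_zero_of_le_one_sub_div_mul_add {x : ℕ → ℝ} {d : ℝ} (hd0 : 0 < d)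
    (hd2 : d ≤ 2) (hx0 : ∀ n, 0 ≤ x n)
    (hstep : ∀ n ≥ 1, x (n + 1) ≤ (1 - d / (n + 1)) * x n + 1 / (n + 1) ^ 2) :
    Tendsto x atTop (nhds 0) := by
  set K := max (2 / d) (x 1)
  have hK : 2 ≤ K * d := by
    calc (2 : ℝ) = 2 / d * d := by field_simp
      _ ≤ K * d := by gcongr; exact le_max_left _ _
  have hbound := le_mul_rpow_neg_of_le_one_sub_div_mul_add hd0 hd2 hK (le_max_right _ _) hstep
  have hlim : Tendsto (fun n : ℕ => K * (n : ℝ) ^ (-(d / 4))) atTop (nhds 0) := by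
    simpa using
      ((tendsto_rpow_neg_atTop (by positivity)).comp tendsto_natCast_atTop_atTop).const_mul K
  exact tendsto_of_tendsto_of_tendsto_of_le_of_le' tendsto_const_nhds hlim
    (Eventually.of_forall hx0) ((eventually_ge_atTop 1).mono hbound)

/-- For any discounted error ratio `c = γβ* ∈ [0, 1)`, the sum of squared
weights `w_k = (∏_{i=n-k}^{n-1} (i + c)) / (∏_{i=n-k}^{n} i)` tends to `0`
as `n → ∞`. -/
theorem ttql_weight_sum_sq_tendsto_zero
    (c : ℝ) (hc0 : 0 ≤ c) (hc : c < 1) :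
    Tendsto (fun n : ℕ =>
        ∑ k ∈ Finset.range n,
          ((∏ i ∈ Finset.Ico (n - k) n, ((i : ℝ) + c)) /
            (∏ i ∈ Finset.Icc (n - k) n, (i : ℝ))) ^ 2)
      atTop (nhds 0) :=
  tendsto_zero_of_le_one_sub_div_mul_add (x := weightSqSum c) (by linarith) (by linarith)
    (weightSqSum_nonneg c) fun n _ => weightSqSum_succ_le hc0 hc.le n
end

section
/- Let γβ* ∈ [0,1) and α_n = (∏_{i=1}^{n-1}(i+γβ*))/(∏_{i=2}^{n} i). Then α_n ≤ ((n-1)^{γβ*}/n)(1+γβ*) e^{(0.5 - ln 2)γβ*} for all n ≥ 3; in particular α_n = O(n^{γβ*-1}) and α_n → 0 as n → ∞. -/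
/-! Writing `α_{m+1} = (1 + c)/(m + 1) · ∏_{i=2}^{m} (1 + c/i)` and using `1 + x ≤ eˣ`, the product
is at most `exp (c · ∑_{i=2}^{m} 1/i)`. Comparing the harmonic tail with `log`, via
`1/(i+1) ≤ log (i+1) - log i`, gives `∑_{i=2}^{m} 1/i ≤ log m + 1/2 - log 2`, whence
`α_{m+1} ≤ (1 + c) m^c e^{(1/2 - log 2) c} / (m + 1)`, which is `O(n^{c-1})`. -/

open Finset Filter Real

lemma inv_add_one_le_log_add_one_sub_log {x : ℝ} (hx : 0 < x) :
    (x + 1)⁻¹ ≤ log (x + 1) - log x := by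
  have h := one_sub_inv_le_log_of_pos (show 0 < (x + 1) / x by positivity)
  rwa [log_div (by positivity) hx.ne', inv_div, one_sub_div (by positivity), add_sub_cancel_left,
    one_div] at h

lemma sum_Icc_two_inv_le_log (m : ℕ) (hm : 2 ≤ m) :
    ∑ i ∈ Icc 2 m, (i : ℝ)⁻¹ ≤ log m + 1 / 2 - log 2 := by
  induction m, hm using Nat.le_induction with
  | base => norm_num
  | succ m hm ih =>
    have hstep := inv_add_one_le_log_add_one_sub_log (show (0 : ℝ) < m by positivity)
    rw [sum_Icc_succ_top (by omega)]
    push_cast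
    linarith

lemma prod_Icc_two_add_div_le (c : ℝ) (hc0 : 0 ≤ c) (m : ℕ) (hm : 2 ≤ m) :
    ∏ i ∈ Icc 2 m, (((i : ℝ) + c) / i) ≤ (m : ℝ) ^ c * exp ((1 / 2 - log 2) * c) := by
  have hm0 : (0 : ℝ) < m := by positivity
  calc ∏ i ∈ Icc 2 m, (((i : ℝ) + c) / i)
      = ∏ i ∈ Icc 2 m, (1 + c * (i : ℝ)⁻¹) := by
        refine prod_congr rfl fun i hi => ?_
        have : (i : ℝ) ≠ 0 := by have := (mem_Icc.mp hi).1; positivity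
        field_simp
    _ ≤ exp (∑ i ∈ Icc 2 m, c * (i : ℝ)⁻¹) :=
        prod_one_add_le_exp_sum _ fun i => by positivity
    _ ≤ exp (c * (log m + 1 / 2 - log 2)) := by
        rw [← mul_sum]
        gcongr
        exact sum_Icc_two_inv_le_log m hm
    _ = (m : ℝ) ^ c * exp ((1 / 2 - log 2) * c) := by
        rw [rpow_def_of_pos hm0, ← exp_add]
        ring_nf

/-- The paper's `α_n`, with `c = γβ*`. -/
noncomputable def initCoeff (c : ℝ) (n : ℕ) : ℝ :=
  (∏ i ∈ Ico 1 n, ((i : ℝ) + c)) / ∏ i ∈ Icc 2 n, (i : ℝ)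

lemma initCoeff_nonneg {c : ℝ} (hc0 : 0 ≤ c) (n : ℕ) : 0 ≤ initCoeff c n := by
  unfold initCoeff
  positivity

lemma initCoeff_succ {c : ℝ} {m : ℕ} (hm : 1 ≤ m) :
    initCoeff c (m + 1) = (1 + c) / (m + 1) * ∏ i ∈ Icc 2 m, (((i : ℝ) + c) / i) := by
  rw [initCoeff, prod_eq_prod_Ico_succ_bot (by omega), Ico_add_one_right_eq_Icc,
    prod_Icc_succ_top (by omega), prod_div_distrib]
  push_cast
  rw [div_mul_div_comm, mul_comm ((m : ℝ) + 1)]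

lemma initCoeff_le {c : ℝ} (hc0 : 0 ≤ c) {n : ℕ} (hn : 3 ≤ n) :
    initCoeff c n ≤ ((n : ℝ) - 1) ^ c / n * (1 + c) * exp ((1 / 2 - log 2) * c) := by
  obtain ⟨m, rfl⟩ : ∃ m, n = m + 1 := ⟨n - 1, by omega⟩
  rw [initCoeff_succ (by omega)]
  push_cast
  rw [add_sub_cancel_right]
  calc (1 + c) / (m + 1) * ∏ i ∈ Icc 2 m, (((i : ℝ) + c) / i)
      ≤ (1 + c) / (m + 1) * ((m : ℝ) ^ c * exp ((1 / 2 - log 2) * c)) := by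
        gcongr
        exact prod_Icc_two_add_div_le c hc0 m (by omega)
    _ = (m : ℝ) ^ c / (m + 1) * (1 + c) * exp ((1 / 2 - log 2) * c) := by ring

lemma tendsto_initCoeff_atTop {c : ℝ} (hc0 : 0 ≤ c) (hc : c < 1) :
    Tendsto (initCoeff c) atTop (nhds 0) := by
  set K := (1 + c) * exp ((1 / 2 - log 2) * c)
  have hpow : Tendsto (fun n : ℕ => (n : ℝ) ^ (c - 1)) atTop (nhds 0) := by
    simpa [Function.comp_def] using
      (tendsto_rpow_neg_atTop (by linarith : 0 < 1 - c)).comp tendsto_natCast_atTop_atTop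
  refine squeeze_zero' (Eventually.of_forall (initCoeff_nonneg hc0)) ?_
    (by simpa using hpow.const_mul K)
  filter_upwards [eventually_ge_atTop 3] with n hn
  have hn0 : (0 : ℝ) < n := by positivity
  calc initCoeff c n ≤ ((n : ℝ) - 1) ^ c / n * (1 + c) * exp ((1 / 2 - log 2) * c) :=
        initCoeff_le hc0 hn
    _ ≤ (n : ℝ) ^ c / n * (1 + c) * exp ((1 / 2 - log 2) * c) := by
        gcongr
        · have : (3 : ℝ) ≤ n := by exact_mod_cast hn
          linarith
        · linarith
    _ = K * (n : ℝ) ^ (c - 1) := by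
        rw [rpow_sub_one hn0.ne']
        ring

/-- For `c = γβ* ∈ [0,1)` and `α_n = (∏_{i=1}^{n-1} (i + c)) / (∏_{i=2}^{n} i)`,
we have `α_n ≤ ((n-1)^c / n) (1 + c) e^{(0.5 - ln 2) c}` for all `n ≥ 3`;
in particular `α_n → 0` as `n → ∞`. -/
theorem ttql_init_coeff_bound
    (c : ℝ) (hc0 : 0 ≤ c) (hc : c < 1) :
    (∀ n : ℕ, 3 ≤ n →
      (∏ i ∈ Finset.Ico 1 n, ((i : ℝ) + c)) / (∏ i ∈ Finset.Icc 2 n, (i : ℝ)) ≤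
        (((n : ℝ) - 1) ^ c / (n : ℝ)) * (1 + c) * Real.exp ((0.5 - Real.log 2) * c))
    ∧ Tendsto (fun n : ℕ =>
        (∏ i ∈ Finset.Ico 1 n, ((i : ℝ) + c)) / (∏ i ∈ Finset.Icc 2 n, (i : ℝ)))
        atTop (nhds 0) := by
  refine ⟨fun n hn => ?_, tendsto_initCoeff_atTop hc0 hc⟩
  have h := initCoeff_le hc0 hn
  rwa [show (1 / 2 : ℝ) = 0.5 by norm_num] at h
end
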